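/- Consider R² with the conformal metric g^f = f² g_Euc where f(x₁,x₂) = −cos(x₁) + 2, and endpoints x⁽⁰⁾ = (0,0), x⁽¹⁾ = (4π, 0). For any integer N ≥ 1, the minimum over all point sequences γᵖ : {0, 1/N, ..., 1} → R² with γᵖ(0) = x⁽⁰⁾ and γᵖ(1) = x⁽¹⁾ of the left-endpoint length approximation L_{l,N}(γᵖ) = (1/N)Σ_{n=0}^{N−1} f(γᵖ(t_n))‖β(t_n)‖₂ equals 4π, whereas the true minimal length min_γ L^{g^f}(γ) over piecewise C¹ curves from x⁽⁰⁾ to x⁽¹⁾ equals 8π. -/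

import Mathlib

open MeasureTheory Real

noncomputable section

/-- A curve `γ` is continuous piecewise `C¹` on `[a,b]`. -/
def PiecewiseC1On {E : Type*} [NormedAddCommGroup E] [NormedSpace ℝ E]
    (γ : ℝ → E) (a b : ℝ) : Prop :=
  ContinuousOn γ (Set.Icc a b) ∧
  ∃ (s : Finset ℝ) (C : ℝ), ∀ t ∈ Set.Ioo a b \ (s : Set ℝ),
    DifferentiableAt ℝ γ t ∧ ContinuousAt (deriv γ) t ∧ ‖deriv γ t‖ ≤ C

/-- The conformal factor `f(x₁,x₂) = −cos x₁ + 2` of the metric `g^f = f² g_Euc`. -/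
def confFactor (x : EuclideanSpace ℝ (Fin 2)) : ℝ := -Real.cos (x 0) + 2

lemma one_le_confFactor (x : EuclideanSpace ℝ (Fin 2)) : 1 ≤ confFactor x := by
  have := Real.cos_le_one (x 0); unfold confFactor; linarith

lemma confFactor_le_three (x : EuclideanSpace ℝ (Fin 2)) : confFactor x ≤ 3 := by
  have := Real.neg_one_le_cos (x 0); unfold confFactor; linarith

lemma continuous_confFactor : Continuous confFactor :=
  (Real.continuous_cos.comp (EuclideanSpace.proj (0 : Fin 2)).continuous).neg.add continuous_const

lemma abs_apply_le_norm (v : EuclideanSpace ℝ (Fin 2)) (i : Fin 2) : |v i| ≤ ‖v‖ := by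
  rw [EuclideanSpace.norm_eq, ← Real.sqrt_sq_eq_abs]
  apply Real.sqrt_le_sqrt
  calc v i ^ 2 = ‖v i‖ ^ 2 := by rw [Real.norm_eq_abs, sq_abs]
    _ ≤ ∑ j, ‖v j‖ ^ 2 := Finset.single_le_sum (f := fun j => ‖v j‖^2)
        (fun j _ => sq_nonneg _) (Finset.mem_univ i)

lemma sin_four_pi : Real.sin (4 * π) = 0 := by
  have := Real.sin_nat_mul_pi 4
  push_cast at this
  linarith

/-- Fundamental theorem of calculus type inequality allowing a finite exceptional set:
if `g` is continuous on `[a,b]`, differentiable outside a finite set `s` with `g' ≤ φ`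
there, and `φ` is integrable, then `g b - g a ≤ ∫ φ`. -/
lemma ftc_aux (g g' φ : ℝ → ℝ) (s : Finset ℝ) :
    ∀ a b : ℝ, a ≤ b → ContinuousOn g (Set.Icc a b) →
    IntegrableOn φ (Set.Icc a b) →
    (∀ x ∈ Set.Ioo a b \ (s : Set ℝ), HasDerivAt g (g' x) x) →
    (∀ x ∈ Set.Ioo a b \ (s : Set ℝ), g' x ≤ φ x) →
    g b - g a ≤ ∫ y in a..b, φ y := by
  induction s using Finset.induction_on with
  | empty =>
    intro a b hab hc hint hd hle
    exact intervalIntegral.sub_le_integral_of_hasDeriv_right_of_le hab hc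
      (fun x hx => (hd x (by simpa using hx)).hasDerivWithinAt) hint
      (fun x hx => hle x (by simpa using hx))
  | @insert c s' hcs ih =>
    intro a b hab hc hint hd hle
    by_cases hcm : c ∈ Set.Ioo a b
    · have hsub1 : ∀ x ∈ Set.Ioo a c \ (s' : Set ℝ),
          x ∈ Set.Ioo a b \ ((insert c s' : Finset ℝ) : Set ℝ) := by
        rintro x ⟨hx, hxs⟩
        refine ⟨⟨hx.1, hx.2.trans hcm.2⟩, ?_⟩
        simp only [Finset.coe_insert, Set.mem_insert_iff]
        push_neg
        exact ⟨hx.2.ne, hxs⟩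
      have hsub2 : ∀ x ∈ Set.Ioo c b \ (s' : Set ℝ),
          x ∈ Set.Ioo a b \ ((insert c s' : Finset ℝ) : Set ℝ) := by
        rintro x ⟨hx, hxs⟩
        refine ⟨⟨hcm.1.trans hx.1, hx.2⟩, ?_⟩
        simp only [Finset.coe_insert, Set.mem_insert_iff]
        push_neg
        exact ⟨hx.1.ne', hxs⟩
      have h1 := ih a c hcm.1.le (hc.mono (Set.Icc_subset_Icc_right hcm.2.le))
        (hint.mono_set (Set.Icc_subset_Icc_right hcm.2.le))
        (fun x hx => hd x (hsub1 x hx)) (fun x hx => hle x (hsub1 x hx))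
      have h2 := ih c b hcm.2.le (hc.mono (Set.Icc_subset_Icc_left hcm.1.le))
        (hint.mono_set (Set.Icc_subset_Icc_left hcm.1.le))
        (fun x hx => hd x (hsub2 x hx)) (fun x hx => hle x (hsub2 x hx))
      have i1 : IntervalIntegrable φ volume a c :=
        (intervalIntegrable_iff_integrableOn_Icc_of_le hcm.1.le).2
          (hint.mono_set (Set.Icc_subset_Icc_right hcm.2.le))
      have i2 : IntervalIntegrable φ volume c b :=
        (intervalIntegrable_iff_integrableOn_Icc_of_le hcm.2.le).2
          (hint.mono_set (Set.Icc_subset_Icc_left hcm.1.le))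
      have hadd := intervalIntegral.integral_add_adjacent_intervals i1 i2
      rw [← hadd]
      linarith
    · refine ih a b hab hc hint (fun x hx => hd x ?_) (fun x hx => hle x ?_) <;>
      · obtain ⟨hx1, hx2⟩ := hx
        refine ⟨hx1, ?_⟩
        simp only [Finset.coe_insert, Set.mem_insert_iff]
        push_neg
        exact ⟨fun h => hcm (h ▸ hx1), hx2⟩

/-- The lower bound for the continuous problem: every continuous piecewise `C¹` curve
from `(0,0)` to `(4π, 0)` has conformal length at least `8π`. -/
lemma length_lower_bound (γ : ℝ → EuclideanSpace ℝ (Fin 2)) (hpc : PiecewiseC1On γ 0 1)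
    (h0 : γ 0 = (0 : EuclideanSpace ℝ (Fin 2)))
    (h1 : γ 1 = EuclideanSpace.single 0 (4 * π)) :
    8 * π ≤ ∫ t in (0:ℝ)..1, confFactor (γ t) * ‖deriv γ t‖ := by
  obtain ⟨hcont, s, C, hP⟩ := hpc
  set γ₁ : ℝ → ℝ := fun t => γ t 0 with hγ₁
  set g : ℝ → ℝ := fun t => 2 * γ₁ t - Real.sin (γ₁ t) with hg
  set g' : ℝ → ℝ := fun t => (2 - Real.cos (γ₁ t)) * (deriv γ t 0) with hg'
  set φ : ℝ → ℝ := fun t => confFactor (γ t) * ‖deriv γ t‖ with hφ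
  have hγ₁cont : ContinuousOn γ₁ (Set.Icc 0 1) :=
    (EuclideanSpace.proj (0 : Fin 2)).continuous.comp_continuousOn hcont
  have hgcont : ContinuousOn g (Set.Icc 0 1) :=
    (continuousOn_const.mul hγ₁cont).sub (Real.continuous_sin.comp_continuousOn hγ₁cont)
  have hd : ∀ x ∈ Set.Ioo (0:ℝ) 1 \ (s : Set ℝ), HasDerivAt g (g' x) x := by
    intro x hx
    obtain ⟨hdiff, -, -⟩ := hP x hx
    have h2 : HasDerivAt γ₁ (deriv γ x 0) x := by
      have := (EuclideanSpace.proj (0:Fin 2)).hasFDerivAt (x := γ x)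
        |>.comp_hasDerivAt x hdiff.hasDerivAt
      exact this
    have h3 := ((h2.const_mul 2).sub h2.sin)
    refine h3.congr_deriv ?_
    simp only [hg']; ring
  have hle : ∀ x ∈ Set.Ioo (0:ℝ) 1 \ (s : Set ℝ), g' x ≤ φ x := by
    intro x _
    have hc1 : confFactor (γ x) = 2 - Real.cos (γ₁ x) := by
      simp [confFactor, hγ₁]; ring
    have hpos : (0:ℝ) ≤ 2 - Real.cos (γ₁ x) := by
      have := Real.cos_le_one (γ₁ x); linarith
    have habs : deriv γ x 0 ≤ ‖deriv γ x‖ :=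
      (le_abs_self _).trans (abs_apply_le_norm _ _)
    show (2 - Real.cos (γ₁ x)) * deriv γ x 0 ≤ confFactor (γ x) * ‖deriv γ x‖
    rw [hc1]
    exact mul_le_mul_of_nonneg_left habs hpos
  have hφint : IntegrableOn φ (Set.Icc (0:ℝ) 1) := by
    have hmeas : AEStronglyMeasurable φ (volume.restrict (Set.Icc (0:ℝ) 1)) := by
      refine AEStronglyMeasurable.mul ?_ ?_
      · exact ((continuous_confFactor.comp_continuousOn hcont).aestronglyMeasurable
          measurableSet_Icc)
      · exact ((measurable_deriv γ).norm).aestronglyMeasurable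
    refine Integrable.mono' (integrable_const (3 * |C|)) hmeas ?_
    have hzero : volume (({0, 1} : Set ℝ) ∪ (s : Set ℝ)) = 0 :=
      Set.Finite.measure_zero (((Set.finite_singleton (1:ℝ)).insert 0).union s.finite_toSet) _
    filter_upwards [ae_restrict_mem measurableSet_Icc,
      ae_restrict_of_ae (measure_eq_zero_iff_ae_notMem.1 hzero)] with x hxI hxn
    have hxIoo : x ∈ Set.Ioo (0:ℝ) 1 \ (s : Set ℝ) := by
      simp only [Set.mem_union, Set.mem_insert_iff, Set.mem_singleton_iff] at hxn
      push_neg at hxn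
      exact ⟨⟨lt_of_le_of_ne hxI.1 (Ne.symm hxn.1.1), lt_of_le_of_ne hxI.2 hxn.1.2⟩, hxn.2⟩
    obtain ⟨-, -, hC⟩ := hP x hxIoo
    have h1' : (0:ℝ) ≤ confFactor (γ x) := le_trans zero_le_one (one_le_confFactor _)
    rw [Real.norm_eq_abs, abs_of_nonneg (mul_nonneg h1' (norm_nonneg _))]
    exact mul_le_mul (confFactor_le_three _) (hC.trans (le_abs_self C)) (norm_nonneg _)
      (by norm_num)
  have key := ftc_aux g g' φ s 0 1 zero_le_one hgcont hφint hd hle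
  have hg1 : g 1 = 8 * π := by
    simp only [hg, hγ₁, h1]
    rw [show (EuclideanSpace.single (0:Fin 2) (4 * π)) 0 = 4 * π by
      simp [EuclideanSpace.single_apply]]
    rw [sin_four_pi]; ring
  have hg0 : g 0 = 0 := by
    simp [hg, hγ₁, h0]
  rw [hg1, hg0, sub_zero] at key
  exact key

/-- Counterexample: for the conformal metric `g^f = f² g_Euc` on `ℝ²` with
`f(x₁,x₂) = −cos x₁ + 2`, endpoints `x⁰ = (0,0)`, `x¹ = (4π,0)`, and any `N ≥ 1`,
the minimum of the left-endpoint length approximation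
`L_{l,N}(γᵖ) = (1/N) Σₙ f(γᵖ(tₙ)) ‖β(tₙ)‖` over point sequences from `x⁰` to `x¹`
equals `4π`, whereas the true minimal length `min L^{g^f}(γ)` over continuous
piecewise `C¹` curves from `x⁰` to `x¹` equals `8π`. -/
theorem left_endpoint_length_approximation_fails (N : ℕ) (hN : 1 ≤ N) :
    IsLeast {L | ∃ γp : ℕ → EuclideanSpace ℝ (Fin 2),
        γp 0 = (0 : EuclideanSpace ℝ (Fin 2)) ∧
        γp N = EuclideanSpace.single 0 (4 * π) ∧
        L = (1 / N) * ∑ n ∈ Finset.range N,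
          confFactor (γp n) * ‖(N : ℝ) • (γp (n + 1) - γp n)‖}
      (4 * π) ∧
    IsLeast {L | ∃ γ : ℝ → EuclideanSpace ℝ (Fin 2),
        PiecewiseC1On γ 0 1 ∧ γ 0 = (0 : EuclideanSpace ℝ (Fin 2)) ∧
        γ 1 = EuclideanSpace.single 0 (4 * π) ∧
        L = ∫ t in (0:ℝ)..1, confFactor (γ t) * ‖deriv γ t‖}
      (8 * π) := by
  have hNR : (0:ℝ) < N := by exact_mod_cast hN
  have hπ : (0:ℝ) ≤ 4 * π := by positivity
  constructor
  · -- discrete part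
    constructor
    · refine ⟨fun n => if n = 0 then 0 else EuclideanSpace.single 0 (4 * π), by simp, by
        simp [Nat.one_le_iff_ne_zero.mp hN], ?_⟩
      have hsum : ∑ n ∈ Finset.range N,
          confFactor ((fun n => if n = 0 then (0:EuclideanSpace ℝ (Fin 2))
              else EuclideanSpace.single 0 (4 * π)) n) *
            ‖(N : ℝ) • ((if n + 1 = 0 then (0:EuclideanSpace ℝ (Fin 2))
              else EuclideanSpace.single 0 (4 * π)) -
              (if n = 0 then 0 else EuclideanSpace.single 0 (4 * π)))‖ = N * (4 * π) := by
        rw [Finset.sum_eq_single 0]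
        · simp [confFactor, norm_smul, EuclideanSpace.norm_single, abs_of_nonneg hπ,
            abs_of_nonneg hNR.le, abs_of_nonneg Real.pi_nonneg]
          ring
        · intro n _ hn
          simp [hn]
        · intro h
          exact absurd (Finset.mem_range.2 (Nat.lt_of_lt_of_le Nat.zero_lt_one hN)) h
      rw [hsum]
      field_simp
    · rintro L ⟨γp, h0, hNp, rfl⟩
      have key : 4 * π ≤ ∑ n ∈ Finset.range N, confFactor (γp n) * ‖γp (n + 1) - γp n‖ := by
        have h1 : 4 * π = dist (γp 0) (γp N) := by
          rw [h0, hNp, dist_eq_norm, zero_sub, norm_neg, EuclideanSpace.norm_single,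
            Real.norm_eq_abs, abs_of_nonneg hπ]
        rw [h1]
        refine (dist_le_range_sum_dist γp N).trans (Finset.sum_le_sum fun n _ => ?_)
        rw [dist_eq_norm, ← norm_neg]
        simp only [neg_sub]
        calc ‖γp (n+1) - γp n‖ = 1 * ‖γp (n+1) - γp n‖ := (one_mul _).symm
          _ ≤ confFactor (γp n) * ‖γp (n+1) - γp n‖ :=
            mul_le_mul_of_nonneg_right (one_le_confFactor _) (norm_nonneg _)
      have hrw : (1 / (N:ℝ)) * ∑ n ∈ Finset.range N,
          confFactor (γp n) * ‖(N : ℝ) • (γp (n + 1) - γp n)‖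
          = ∑ n ∈ Finset.range N, confFactor (γp n) * ‖γp (n + 1) - γp n‖ := by
        rw [Finset.mul_sum]
        refine Finset.sum_congr rfl fun n _ => ?_
        rw [norm_smul, Real.norm_natCast]
        field_simp
      rw [hrw]
      exact key
  · -- continuous part
    constructor
    · -- the straight segment realizes length 8π
      set c : EuclideanSpace ℝ (Fin 2) := EuclideanSpace.single 0 (4 * π) with hc
      refine ⟨fun t => t • c, ?_, by simp, by simp, ?_⟩
      · have hder : ∀ t : ℝ, HasDerivAt (fun t : ℝ => t • c) c t := fun t => by
          simpa using (hasDerivAt_id t).smul_const c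
        have hderiv_eq : deriv (fun t : ℝ => t • c) = fun _ => c :=
          funext fun t => (hder t).deriv
        refine ⟨(continuous_id.smul continuous_const).continuousOn, ∅, ‖c‖, fun t _ => ?_⟩
        rw [hderiv_eq]
        exact ⟨(hder t).differentiableAt, continuous_const.continuousAt, le_rfl⟩
      · have hder : ∀ t : ℝ, HasDerivAt (fun t : ℝ => t • c) c t := fun t => by
          simpa using (hasDerivAt_id t).smul_const c
        have hderiv_eq : deriv (fun t : ℝ => t • c) = fun _ => c :=
          funext fun t => (hder t).deriv
        have hnc : ‖c‖ = 4 * π := by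
          rw [hc, EuclideanSpace.norm_single, Real.norm_eq_abs, abs_of_nonneg (by positivity)]
        have hca : c 0 = 4 * π := by simp [hc, EuclideanSpace.single_apply]
        have hint : ∀ t : ℝ, confFactor (t • c) * ‖deriv (fun t : ℝ => t • c) t‖
            = (-Real.cos (t * (4 * π)) + 2) * (4 * π) := by
          intro t
          rw [hderiv_eq]
          simp only [confFactor, PiLp.smul_apply, smul_eq_mul, hca, hnc]
        rw [intervalIntegral.integral_congr (fun t _ => hint t)]
        have hG : ∀ t : ℝ, HasDerivAt (fun t : ℝ => 8 * π * t - Real.sin (t * (4 * π)))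
            ((-Real.cos (t * (4 * π)) + 2) * (4 * π)) t := by
          intro t
          have h1 : HasDerivAt (fun t : ℝ => 8 * π * t) (8 * π) t := by
            simpa using (hasDerivAt_id t).const_mul (8 * π)
          have h2 : HasDerivAt (fun t : ℝ => Real.sin (t * (4 * π)))
              (Real.cos (t * (4 * π)) * (4 * π)) t := by
            have := ((hasDerivAt_id t).mul_const (4 * π)).sin
            simpa using this
          have := h1.sub h2
          refine this.congr_deriv ?_
          ring
        rw [intervalIntegral.integral_eq_sub_of_hasDerivAt (fun t _ => hG t)
          (Continuous.intervalIntegrable (by fun_prop) _ _)]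
        simp [sin_four_pi]
    · rintro L ⟨γ, hpc, h0, h1, rfl⟩
      exact length_lower_bound γ hpc h0 h1
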